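/- arXiv:2603.19663 — 2 statements merged into one kernel-verified Lean document; each statement's English description precedes it below -/
import Mathlib

section
/- Let N ≥ 1 be an integer, D_u, D_v > 0, q ≥ 1 and κ ≥ 0, and set ρ(r) = r^{N−1} e^{r²/(4D_v)}. There exist constants ε > 0 and L > 0 (depending only on N, D_u, D_v, κ, q) such that for every 0 < λ ≤ ε and every positive C² solution φ : [0,R) → ℝ of D_v (ρ φ')' = κ ρ φ + λ ρ e^{−r²/(4D_u)} φ^q on (0,R) with φ(0) = 1, φ'(0) = 0, one has φ(r) ≤ L max(r,1)^{4(κ+1)} for all r ∈ [0,R); in particular φ cannot blow up at a finite point. Moreover, when q = 1 the same conclusion (with L and the exponent depending on λ) holds for every λ > 0. -/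
open Real Set

/-- A positive C² solution of the self-similar profile equation
`Dᵥ (ρ φ')' = κ ρ φ + λ ρ e^{-r²/(4Dᵤ)} φ^q` on `[0,R)` with `φ(0)=1`, `φ'(0)=0`,
where `ρ(r) = r^{N-1} e^{r²/(4Dᵥ)}`. -/
def IsProfileSol (N : ℕ) (Du Dv lam q κ : ℝ) (R : EReal) (φ dφ : ℝ → ℝ) : Prop :=
  (∀ r : ℝ, 0 ≤ r → (r : EReal) < R → 0 < φ r) ∧
  (∀ r : ℝ, 0 ≤ r → (r : EReal) < R → HasDerivWithinAt φ (dφ r) (Ici 0) r) ∧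
  (∀ r : ℝ, 0 < r → (r : EReal) < R →
    HasDerivAt (fun s => Dv * ((s ^ (N - 1) * Real.exp (s ^ 2 / (4 * Dv))) * dφ s))
      (κ * (r ^ (N - 1) * Real.exp (r ^ 2 / (4 * Dv))) * φ r
        + lam * (r ^ (N - 1) * Real.exp (r ^ 2 / (4 * Dv)))
            * Real.exp (-(r ^ 2) / (4 * Du)) * φ r ^ q) r) ∧
  φ 0 = 1 ∧ dφ 0 = 0

/-!
The equation says that the flux `Dᵥ ρ φ'` has the nonnegative derivative
`κ ρ φ + λ ρ e^{-r²/(4Dᵤ)} φ^q`; since `φ'(0) = 0`, the flux is nonnegative and bounded by the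
integral of the source, so `φ` is nondecreasing and `φ ≥ 1`. If the nonlinear term is at most
`μ φ`, monotonicity gives `Dᵥ ρ(s) φ'(s) ≤ (κ + μ) φ(s) ∫₀ˢ ρ`, and the two estimates
`∫₀ˢ ρ ≤ s ρ(s)` and `∫₀ˢ ρ ≤ (4Dᵥ/s) ρ(s)` turn this into `φ' ≤ (κ + μ) s φ / Dᵥ` and
`φ' ≤ 4 (κ + μ) φ / s`; Gronwall's inequality on `[0, 1]` and on `[1, r]` then gives
`φ(r) ≤ e^{(κ+μ)/(2Dᵥ)} max(r, 1)^{4(κ+μ)}`.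

For `q = 1` the nonlinear term is at most `λ φ`. For general `q` and small `λ` we argue by
continuity: as long as `φ ≤ 2C max(·, 1)^{4(κ+1)}`, the Gaussian factor absorbs the polynomial
growth of `φ^q`, the nonlinear term is at most `φ`, and the bound above with `μ = 1` is the strictly
better `C max(·, 1)^{4(κ+1)}`.
-/

theorem le_of_hasDerivWithinAt_Ici_of_le_deriv {φ dφ : ℝ → ℝ} {a b k d : ℝ} (hab : a < b)
    (hcont : ContinuousOn φ (Icc a b)) (hder : ∀ x ∈ Ioo a b, HasDerivAt φ (dφ x) x)
    (hk : ∀ x ∈ Ioo a b, k ≤ dφ x) (ha : HasDerivWithinAt φ d (Ici a) a) : k ≤ d := by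
  rw [← interior_Icc] at hder hk
  have hslope : ∀ x ∈ Ioc a b, k ≤ slope φ a x := by
    intro x hx
    have hgrowth := (convex_Icc a b).mul_sub_le_image_sub_of_le_deriv hcont
      (fun y hy => (hder y hy).differentiableAt.differentiableWithinAt)
      (fun y hy => (hder y hy).deriv ▸ hk y hy)
      a (left_mem_Icc.2 hab.le) x (Ioc_subset_Icc_self hx) hx.1.le
    rw [slope_def_field, le_div_iff₀ (sub_pos.2 hx.1)]
    linarith
  refine ge_of_tendsto ((hasDerivWithinAt_iff_tendsto_slope' self_notMem_Ioi).1 ha.Ioi_of_Ici) ?_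
  filter_upwards [Ioc_mem_nhdsGT hab] with x hx using hslope x hx

theorem nonpos_of_le_mul_deriv {φ dφ w : ℝ → ℝ} {a b η W : ℝ} (hab : a < b)
    (hcont : ContinuousOn φ (Icc a b)) (hder : ∀ x ∈ Ioo a b, HasDerivAt φ (dφ x) x)
    (ha : HasDerivWithinAt φ 0 (Ici a) a) (hw : ∀ x ∈ Ioo a b, 0 < w x ∧ w x ≤ W)
    (hη : ∀ x ∈ Ioo a b, η ≤ w x * dφ x) : η ≤ 0 := by
  by_contra! hη0
  obtain ⟨hw0, hwW⟩ := hw ((a + b) / 2) ⟨by linarith, by linarith⟩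
  have hW : 0 < W := hw0.trans_le hwW
  refine (le_of_hasDerivWithinAt_Ici_of_le_deriv hab hcont hder (k := η / W)
    (fun x hx => ?_) ha).not_gt (by positivity)
  obtain ⟨hwx, hwxW⟩ := hw x hx
  calc η / W ≤ η / w x := div_le_div_of_nonneg_left hη0.le hwx hwxW
    _ ≤ dφ x := (div_le_iff₀' hwx).2 (hη x hx)

theorem forall_lt_of_le_before_imp_lt {φ G : ℝ → ℝ} {a r : ℝ}
    (hφ : ContinuousOn φ (Icc a r)) (hG : ContinuousOn G (Icc a r))
    (hstep : ∀ b ∈ Icc a r, (∀ t ∈ Ico a b, φ t ≤ G t) → φ b < G b) :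
    ∀ x ∈ Icc a r, φ x < G x := by
  by_contra! hbad
  set S := Icc a r ∩ {x | G x ≤ φ x}
  have hSne : S.Nonempty := hbad
  have hSbdd : BddBelow S := ⟨a, fun x hx => hx.1.1⟩
  have hT : sInf S ∈ S :=
    ((hG.prodMk hφ).preimage_isClosed_of_isClosed isClosed_Icc isClosed_le_prod).csInf_mem
      hSne hSbdd
  refine (hstep _ hT.1 fun t ht => ?_).not_ge hT.2
  by_contra! hlt
  exact (csInf_le hSbdd ⟨⟨ht.1, ht.2.le.trans hT.1.2⟩, hlt.le⟩).not_gt ht.2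

theorem le_mul_exp_sub_of_deriv_le_mul {φ dφ F f : ℝ → ℝ} {a b : ℝ}
    (hφ : ContinuousOn φ (Icc a b)) (hF : ContinuousOn F (Icc a b))
    (hφ' : ∀ x ∈ Ioo a b, HasDerivAt φ (dφ x) x) (hF' : ∀ x ∈ Ioo a b, HasDerivAt F (f x) x)
    (hle : ∀ x ∈ Ioo a b, dφ x ≤ f x * φ x) :
    ∀ r ∈ Icc a b, φ r ≤ φ a * exp (F r - F a) := by
  have hanti : AntitoneOn (fun x => φ x * exp (-F x)) (Icc a b) := by
    refine antitoneOn_of_hasDerivWithinAt_nonpos (convex_Icc a b)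
      (hφ.mul (hF.neg.rexp)) (fun x hx => ?_) (fun x hx => ?_)
      (f' := fun x => (dφ x - f x * φ x) * exp (-F x))
    · rw [interior_Icc] at hx
      refine (((hφ' x hx).mul (hF' x hx).fun_neg.exp).congr_deriv ?_).hasDerivWithinAt
      ring
    · rw [interior_Icc] at hx
      exact mul_nonpos_of_nonpos_of_nonneg (sub_nonpos.2 (hle x hx)) (exp_pos _).le
  intro r hr
  have h := hanti (left_mem_Icc.2 (hr.1.trans hr.2)) hr hr.1
  have hexp : exp (F r - F a) = exp (-F a) * exp (F r) := by rw [← exp_add]; ring_nf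
  calc φ r = φ r * exp (-F r) * exp (F r) := by rw [mul_assoc, ← exp_add]; simp
    _ ≤ φ a * exp (-F a) * exp (F r) := by gcongr
    _ = φ a * exp (F r - F a) := by rw [hexp, mul_assoc]

theorem le_mul_exp_of_deriv_le_mul_mul {φ dφ : ℝ → ℝ} {b c : ℝ}
    (hφ : ContinuousOn φ (Icc 0 b)) (hφ' : ∀ x ∈ Ioo 0 b, HasDerivAt φ (dφ x) x)
    (hle : ∀ x ∈ Ioo 0 b, dφ x ≤ c * x * φ x) :
    ∀ r ∈ Icc 0 b, φ r ≤ φ 0 * exp (c * r ^ 2 / 2) := by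
  intro r hr
  simpa using le_mul_exp_sub_of_deriv_le_mul hφ (F := fun x => c * x ^ 2 / 2) (f := fun x => c * x)
    (by fun_prop) hφ'
    (fun x _ => (((hasDerivAt_pow 2 x).const_mul c).div_const 2).congr_deriv (by ring)) hle r hr

theorem le_mul_div_rpow_of_deriv_le_div_mul {φ dφ : ℝ → ℝ} {a b c : ℝ} (ha : 0 < a)
    (hφ : ContinuousOn φ (Icc a b)) (hφ' : ∀ x ∈ Ioo a b, HasDerivAt φ (dφ x) x)
    (hle : ∀ x ∈ Ioo a b, dφ x ≤ c / x * φ x) :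
    ∀ r ∈ Icc a b, φ r ≤ φ a * (r / a) ^ c := by
  intro r hr
  have hr0 : 0 < r := ha.trans_le hr.1
  have h := le_mul_exp_sub_of_deriv_le_mul hφ (F := fun x => c * log x)
    (fun x hx => ((continuousAt_log (ha.trans_le hx.1).ne').const_mul _).continuousWithinAt) hφ'
    (fun x hx => by simpa [div_eq_mul_inv] using (hasDerivAt_log (ha.trans hx.1).ne').const_mul c)
    hle r hr
  rwa [← mul_sub, ← log_div hr0.ne' ha.ne', mul_comm c,
    ← rpow_def_of_pos (div_pos hr0 ha)] at h

noncomputable def profileWeight (N : ℕ) (Dv s : ℝ) : ℝ := s ^ (N - 1) * exp (s ^ 2 / (4 * Dv))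

section profileWeight

variable {N : ℕ} {Dv s : ℝ}

theorem profileWeight_pos (hs : 0 < s) : 0 < profileWeight N Dv s := by
  unfold profileWeight; positivity

theorem profileWeight_nonneg (hs : 0 ≤ s) : 0 ≤ profileWeight N Dv s := by
  unfold profileWeight; positivity

theorem continuous_profileWeight : Continuous (profileWeight N Dv) := by
  unfold profileWeight; fun_prop

theorem profileWeight_monotoneOn (hDv : 0 ≤ Dv) : MonotoneOn (profileWeight N Dv) (Ici 0) := by
  intro t (ht : 0 ≤ t) s (hs : 0 ≤ s) hts
  unfold profileWeight
  gcongr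

theorem integral_profileWeight_le_mul (hDv : 0 ≤ Dv) (hs : 0 ≤ s) :
    ∫ t in (0 : ℝ)..s, profileWeight N Dv t ≤ s * profileWeight N Dv s := by
  simpa using intervalIntegral.integral_mono_on hs
    (continuous_profileWeight.intervalIntegrable _ _)
    (intervalIntegrable_const (μ := MeasureTheory.volume))
    fun t ht => profileWeight_monotoneOn hDv ht.1 (ht.1.trans ht.2 : (0 : ℝ) ≤ s) ht.2

theorem integral_profileWeight_le_div (hDv : 0 < Dv) (hs : 0 < s) :
    ∫ t in (0 : ℝ)..s, profileWeight N Dv t ≤ 4 * Dv / s * profileWeight N Dv s := by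
  set k := s / (4 * Dv) with hk
  have hk0 : 0 < k := by positivity
  -- `t² ≤ t s` on `[0, s]` turns the Gaussian factor into an exponential we can integrate.
  have hpt : ∀ t ∈ Icc 0 s, profileWeight N Dv t ≤ s ^ (N - 1) * exp (t * k) := by
    intro t ht
    unfold profileWeight
    gcongr
    · exact ht.1
    · exact ht.2
    · rw [hk, mul_div_assoc']
      gcongr
      nlinarith [ht.1, ht.2]
  have hexp : ∫ t in (0 : ℝ)..s, exp (t * k) = k⁻¹ * (exp (s * k) - 1) := by
    simp [intervalIntegral.integral_comp_mul_right _ hk0.ne', integral_exp]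
  calc ∫ t in (0 : ℝ)..s, profileWeight N Dv t
      ≤ ∫ t in (0 : ℝ)..s, s ^ (N - 1) * exp (t * k) :=
        intervalIntegral.integral_mono_on hs.le (continuous_profileWeight.intervalIntegrable _ _)
          ((by fun_prop : Continuous fun t => s ^ (N - 1) * exp (t * k)).intervalIntegrable _ _) hpt
    _ = s ^ (N - 1) * (k⁻¹ * (exp (s * k) - 1)) := by
        rw [intervalIntegral.integral_const_mul, hexp]
    _ ≤ s ^ (N - 1) * (k⁻¹ * exp (s * k)) := by gcongr; linarith
    _ = 4 * Dv / s * profileWeight N Dv s := by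
        rw [profileWeight, hk, inv_div]; ring_nf

theorem deriv_le_of_flux_le {c k dφs φs : ℝ} (hDv : 0 < Dv) (hs : 0 < s)
    (hcφ : 0 ≤ c * φs)
    (hflux : Dv * (profileWeight N Dv s * dφs) ≤ c * φs * ∫ t in (0 : ℝ)..s, profileWeight N Dv t)
    (hint : ∫ t in (0 : ℝ)..s, profileWeight N Dv t ≤ k * profileWeight N Dv s) :
    dφs ≤ c * k / Dv * φs := by
  have hw := profileWeight_pos (N := N) (Dv := Dv) hs
  have h : Dv * profileWeight N Dv s * dφs ≤ Dv * profileWeight N Dv s * (c * k / Dv * φs) := by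
    calc Dv * profileWeight N Dv s * dφs ≤ c * φs * (k * profileWeight N Dv s) := by
          rw [mul_assoc]; exact hflux.trans (mul_le_mul_of_nonneg_left hint hcφ)
      _ = Dv * profileWeight N Dv s * (c * k / Dv * φs) := by field_simp
  exact le_of_mul_le_mul_left h (by positivity)

theorem le_exp_mul_max_rpow_of_flux_le {b c : ℝ} {φ dφ : ℝ → ℝ}
    (hDv : 0 < Dv) (hc : 0 ≤ c) (hcont : ContinuousOn φ (Icc 0 b))
    (hder : ∀ x ∈ Ioo 0 b, HasDerivAt φ (dφ x) x) (hφ0 : φ 0 = 1)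
    (hpos : ∀ x ∈ Icc 0 b, 0 < φ x)
    (hflux : ∀ x ∈ Ioo 0 b,
      Dv * (profileWeight N Dv x * dφ x) ≤ c * φ x * ∫ t in (0 : ℝ)..x, profileWeight N Dv t) :
    ∀ r ∈ Icc 0 b, φ r ≤ exp (c / (2 * Dv)) * max r 1 ^ (4 * c) := by
  have hcφ : ∀ x ∈ Ioo 0 b, 0 ≤ c * φ x := fun x hx =>
    mul_nonneg hc (hpos x (Ioo_subset_Icc_self hx)).le
  have hnear : ∀ x ∈ Ioo 0 b, dφ x ≤ c / Dv * x * φ x := fun x hx =>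
    (deriv_le_of_flux_le hDv hx.1 (hcφ x hx) (hflux x hx)
      (integral_profileWeight_le_mul hDv.le hx.1.le)).trans_eq (by ring)
  have hfar : ∀ x ∈ Ioo 0 b, dφ x ≤ 4 * c / x * φ x := fun x hx =>
    (deriv_le_of_flux_le hDv hx.1 (hcφ x hx) (hflux x hx)
      (integral_profileWeight_le_div hDv hx.1)).trans_eq (by field_simp)
  have hle_one : ∀ r ∈ Icc 0 b, r ≤ 1 → φ r ≤ exp (c / (2 * Dv)) := by
    intro r hr hr1
    refine (le_mul_exp_of_deriv_le_mul_mul hcont hder hnear r hr).trans ?_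
    rw [hφ0, one_mul, mul_div_assoc, div_mul_div_comm, mul_comm Dv]
    gcongr
    exact mul_le_of_le_one_right hc (pow_le_one₀ hr.1 hr1)
  intro r hr
  rcases le_or_gt r 1 with hr1 | hr1
  · rw [max_eq_right hr1, one_rpow, mul_one]
    exact hle_one r hr hr1
  have hfar_bound := le_mul_div_rpow_of_deriv_le_div_mul one_pos
    (hcont.mono (Icc_subset_Icc zero_le_one le_rfl))
    (fun x hx => hder x ⟨one_pos.trans hx.1, hx.2⟩)
    (fun x hx => hfar x ⟨one_pos.trans hx.1, hx.2⟩) r ⟨hr1.le, hr.2⟩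
  rw [div_one] at hfar_bound
  rw [max_eq_left hr1.le]
  exact hfar_bound.trans (by gcongr; exact hle_one 1 ⟨zero_le_one, hr1.le.trans hr.2⟩ le_rfl)

end profileWeight

theorem exp_neg_sq_div_mul_max_rpow_le {D a t : ℝ} (hD : 0 < D) (ha : 0 ≤ a) (ht : 0 ≤ t) :
    exp (-(t ^ 2) / (4 * D)) * max t 1 ^ a ≤ exp (D * a ^ 2) := by
  have hm : 0 < max t 1 := zero_lt_one.trans_le (le_max_right t 1)
  have hlog : log (max t 1) ≤ t :=
    (log_le_sub_one_of_pos hm).trans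
      (by rw [sub_le_iff_le_add]; exact max_le (by linarith) (by linarith))
  have hsq : t * a - D * a ^ 2 ≤ t ^ 2 / (4 * D) := by
    rw [le_div_iff₀ (by positivity)]
    nlinarith [sq_nonneg (t - 2 * D * a)]
  rw [rpow_def_of_pos hm, ← exp_add, neg_div]
  gcongr
  nlinarith [mul_le_mul_of_nonneg_right hlog ha]

noncomputable def profileSource (N : ℕ) (Du Dv lam q κ : ℝ) (φ : ℝ → ℝ) (t : ℝ) : ℝ :=
  κ * profileWeight N Dv t * φ t
    + lam * profileWeight N Dv t * exp (-(t ^ 2) / (4 * Du)) * φ t ^ q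

theorem EReal.coe_lt_of_le_of_coe_lt {x b : ℝ} {R : EReal} (hxb : x ≤ b) (hbR : (b : EReal) < R) :
    (x : EReal) < R :=
  (EReal.coe_le_coe_iff.2 hxb).trans_lt hbR

namespace IsProfileSol

variable {N : ℕ} {Du Dv lam q κ : ℝ} {R : EReal} {φ dφ : ℝ → ℝ} {b : ℝ}

theorem pos (h : IsProfileSol N Du Dv lam q κ R φ dφ) (hbR : (b : EReal) < R) {x : ℝ}
    (hx : x ∈ Icc 0 b) : 0 < φ x :=
  h.1 x hx.1 (EReal.coe_lt_of_le_of_coe_lt hx.2 hbR)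

theorem continuousOn (h : IsProfileSol N Du Dv lam q κ R φ dφ) (hbR : (b : EReal) < R) :
    ContinuousOn φ (Icc 0 b) := fun x hx =>
  (h.2.1 x hx.1 (EReal.coe_lt_of_le_of_coe_lt hx.2 hbR)).continuousWithinAt.mono
    Icc_subset_Ici_self

theorem hasDerivAt (h : IsProfileSol N Du Dv lam q κ R φ dφ) (hbR : (b : EReal) < R) {x : ℝ}
    (hx : x ∈ Ioc 0 b) : HasDerivAt φ (dφ x) x :=
  (h.2.1 x hx.1.le (EReal.coe_lt_of_le_of_coe_lt hx.2 hbR)).hasDerivAt (Ici_mem_nhds hx.1)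

theorem hasDerivWithinAt_zero (h : IsProfileSol N Du Dv lam q κ R φ dφ)
    (hbR : (b : EReal) < R) (hb : 0 ≤ b) : HasDerivWithinAt φ 0 (Ici 0) 0 := by
  simpa [h.2.2.2.2] using h.2.1 0 le_rfl (EReal.coe_lt_of_le_of_coe_lt hb hbR)

theorem hasDerivAt_flux (h : IsProfileSol N Du Dv lam q κ R φ dφ) (hbR : (b : EReal) < R)
    {x : ℝ} (hx : x ∈ Ioc 0 b) :
    HasDerivAt (fun s => Dv * (profileWeight N Dv s * dφ s))
      (profileSource N Du Dv lam q κ φ x) x :=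
  h.2.2.1 x hx.1 (EReal.coe_lt_of_le_of_coe_lt hx.2 hbR)

theorem profileSource_nonneg (h : IsProfileSol N Du Dv lam q κ R φ dφ) (hbR : (b : EReal) < R)
    (hκ : 0 ≤ κ) (hlam : 0 ≤ lam) {x : ℝ} (hx : x ∈ Icc 0 b) :
    0 ≤ profileSource N Du Dv lam q κ φ x := by
  have := h.pos hbR hx
  have := profileWeight_nonneg (N := N) (Dv := Dv) hx.1
  unfold profileSource
  positivity

theorem continuousOn_profileSource (h : IsProfileSol N Du Dv lam q κ R φ dφ)
    (hbR : (b : EReal) < R) : ContinuousOn (profileSource N Du Dv lam q κ φ) (Icc 0 b) := by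
  have hφ := h.continuousOn hbR
  have hw : Continuous (profileWeight N Dv) := continuous_profileWeight
  unfold profileSource
  exact (continuous_const.mul hw).continuousOn.mul hφ |>.add <|
    ((continuous_const.mul hw).mul (by fun_prop)).continuousOn.mul
      (hφ.rpow_const fun x hx => Or.inl (h.pos hbR hx).ne')

theorem flux_monotoneOn (h : IsProfileSol N Du Dv lam q κ R φ dφ) (hbR : (b : EReal) < R)
    (hκ : 0 ≤ κ) (hlam : 0 ≤ lam) :
    MonotoneOn (fun s => Dv * (profileWeight N Dv s * dφ s)) (Ioc 0 b) := by
  refine monotoneOn_of_hasDerivWithinAt_nonneg (convex_Ioc 0 b)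
    (fun x hx => (h.hasDerivAt_flux hbR hx).continuousAt.continuousWithinAt)
    (fun x hx => ?_) (fun x hx => ?_) (f' := profileSource N Du Dv lam q κ φ)
  · rw [interior_Ioc] at hx
    exact (h.hasDerivAt_flux hbR (Ioo_subset_Ioc_self hx)).hasDerivWithinAt
  · rw [interior_Ioc] at hx
    exact h.profileSource_nonneg hbR hκ hlam (Ioo_subset_Icc_self hx)

theorem deriv_nonneg (h : IsProfileSol N Du Dv lam q κ R φ dφ) (hbR : (b : EReal) < R)
    (hDv : 0 < Dv) (hκ : 0 ≤ κ) (hlam : 0 ≤ lam) {x : ℝ} (hx : x ∈ Ioc 0 b) : 0 ≤ dφ x := by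
  have hw : 0 < Dv * profileWeight N Dv x := mul_pos hDv (profileWeight_pos hx.1)
  have hxR := EReal.coe_lt_of_le_of_coe_lt hx.2 hbR
  -- If the flux were negative at `x`, it would stay below that value on `(0, x)`,
  -- forcing `φ' ≤ -c < 0` there, incompatible with `φ'(0) = 0`.
  have hflux : -(Dv * profileWeight N Dv x * dφ x) ≤ 0 := by
    refine nonpos_of_le_mul_deriv (φ := fun s => -φ s) (dφ := fun s => -dφ s) hx.1
      (h.continuousOn hxR).neg (fun s hs => (h.hasDerivAt hxR (Ioo_subset_Ioc_self hs)).neg)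
      (by simpa using (h.hasDerivWithinAt_zero hxR hx.1.le).fun_neg)
      (w := fun s => Dv * profileWeight N Dv s) (W := Dv * profileWeight N Dv x)
      (fun s hs => ⟨mul_pos hDv (profileWeight_pos hs.1), mul_le_mul_of_nonneg_left
        (profileWeight_monotoneOn hDv.le hs.1.le hx.1.le hs.2.le) hDv.le⟩) fun s hs => ?_
    have := h.flux_monotoneOn hbR hκ hlam ⟨hs.1, hs.2.le.trans hx.2⟩ hx hs.2.le
    simp only [mul_assoc] at this ⊢
    linarith
  exact nonneg_of_mul_nonneg_right (by linarith) hw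

theorem monotoneOn (h : IsProfileSol N Du Dv lam q κ R φ dφ) (hbR : (b : EReal) < R)
    (hDv : 0 < Dv) (hκ : 0 ≤ κ) (hlam : 0 ≤ lam) : MonotoneOn φ (Icc 0 b) := by
  refine monotoneOn_of_hasDerivWithinAt_nonneg (convex_Icc 0 b) (h.continuousOn hbR)
    (fun x hx => ?_) (fun x hx => ?_) (f' := dφ)
  · rw [interior_Icc] at hx
    exact (h.hasDerivAt hbR (Ioo_subset_Ioc_self hx)).hasDerivWithinAt
  · rw [interior_Icc] at hx
    exact h.deriv_nonneg hbR hDv hκ hlam (Ioo_subset_Ioc_self hx)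

theorem one_le (h : IsProfileSol N Du Dv lam q κ R φ dφ) (hbR : (b : EReal) < R)
    (hDv : 0 < Dv) (hκ : 0 ≤ κ) (hlam : 0 ≤ lam) {x : ℝ} (hx : x ∈ Icc 0 b) : 1 ≤ φ x :=
  h.2.2.2.1 ▸ h.monotoneOn hbR hDv hκ hlam (left_mem_Icc.2 (hx.1.trans hx.2)) hx hx.1

theorem flux_le_integral (h : IsProfileSol N Du Dv lam q κ R φ dφ) (hbR : (b : EReal) < R)
    (hDv : 0 < Dv) (hκ : 0 ≤ κ) (hlam : 0 ≤ lam) {s : ℝ} (hs : s ∈ Ioc 0 b) :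
    Dv * (profileWeight N Dv s * dφ s) ≤ ∫ t in (0 : ℝ)..s, profileSource N Du Dv lam q κ φ t := by
  have hsR := EReal.coe_lt_of_le_of_coe_lt hs.2 hbR
  have hsrc := h.continuousOn_profileSource hsR
  refine le_of_forall_pos_le_add fun η hη => ?_
  -- A flux bounded below by `η > 0` near `0` would force `φ' ≥ c > 0` there.
  obtain ⟨a, ha, hfa⟩ : ∃ a ∈ Ioo 0 s, Dv * (profileWeight N Dv a * dφ a) < η := by
    by_contra! hge
    refine (nonpos_of_le_mul_deriv hs.1 (h.continuousOn hsR)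
      (fun x hx => h.hasDerivAt hsR (Ioo_subset_Ioc_self hx)) (h.hasDerivWithinAt_zero hsR hs.1.le)
      (w := fun x => Dv * profileWeight N Dv x) (W := Dv * profileWeight N Dv s)
      (fun x hx => ⟨mul_pos hDv (profileWeight_pos hx.1), mul_le_mul_of_nonneg_left
        (profileWeight_monotoneOn hDv.le hx.1.le hs.1.le hx.2.le) hDv.le⟩)
      fun x hx => (hge x hx).trans_eq (mul_assoc _ _ _).symm).not_gt hη
  have hftc : ∫ t in a..s, profileSource N Du Dv lam q κ φ t
      = Dv * (profileWeight N Dv s * dφ s) - Dv * (profileWeight N Dv a * dφ a) := by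
    refine intervalIntegral.integral_eq_sub_of_hasDerivAt
      (f := fun x => Dv * (profileWeight N Dv x * dφ x)) (fun x hx => ?_)
      ((hsrc.mono (Icc_subset_Icc ha.1.le le_rfl)).intervalIntegrable_of_Icc ha.2.le)
    rw [uIcc_of_le ha.2.le] at hx
    exact h.hasDerivAt_flux hsR ⟨ha.1.trans_le hx.1, hx.2⟩
  have hhead : 0 ≤ ∫ t in (0 : ℝ)..a, profileSource N Du Dv lam q κ φ t :=
    intervalIntegral.integral_nonneg ha.1.le fun t ht =>
      h.profileSource_nonneg hsR hκ hlam ⟨ht.1, ht.2.trans ha.2.le⟩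
  have hsplit := intervalIntegral.integral_add_adjacent_intervals (μ := MeasureTheory.volume)
    ((hsrc.mono (Icc_subset_Icc le_rfl ha.2.le)).intervalIntegrable_of_Icc ha.1.le)
    ((hsrc.mono (Icc_subset_Icc ha.1.le le_rfl)).intervalIntegrable_of_Icc ha.2.le)
  linarith

theorem le_of_source_le (h : IsProfileSol N Du Dv lam q κ R φ dφ) (hbR : (b : EReal) < R)
    (hb : 0 ≤ b) (hDv : 0 < Dv) (hκ : 0 ≤ κ) (hlam : 0 ≤ lam) {μ : ℝ} (hμ : 0 ≤ μ)
    (hsrc : ∀ t ∈ Ico 0 b, lam * exp (-(t ^ 2) / (4 * Du)) * φ t ^ q ≤ μ * φ t) :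
    φ b ≤ exp ((κ + μ) / (2 * Dv)) * max b 1 ^ (4 * (κ + μ)) := by
  refine le_exp_mul_max_rpow_of_flux_le (N := N) hDv (by positivity) (h.continuousOn hbR)
    (fun s hs => h.hasDerivAt hbR (Ioo_subset_Ioc_self hs)) h.2.2.2.1 (fun s hs => h.pos hbR hs)
    (fun s hs => ?_) b (right_mem_Icc.2 hb)
  have hsR := EReal.coe_lt_of_le_of_coe_lt hs.2.le hbR
  have hpt : ∀ t ∈ Icc 0 s,
      profileSource N Du Dv lam q κ φ t ≤ (κ + μ) * φ s * profileWeight N Dv t := by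
    intro t ht
    have hw := profileWeight_nonneg (N := N) (Dv := Dv) ht.1
    have hφts : φ t ≤ φ s :=
      h.monotoneOn hsR hDv hκ hlam ht (right_mem_Icc.2 hs.1.le) ht.2
    calc profileSource N Du Dv lam q κ φ t
        = profileWeight N Dv t * (κ * φ t + lam * exp (-(t ^ 2) / (4 * Du)) * φ t ^ q) := by
          unfold profileSource; ring
      _ ≤ profileWeight N Dv t * (κ * φ t + μ * φ t) := by
          gcongr ?_ * (_ + ?_)
          exact hsrc t ⟨ht.1, ht.2.trans_lt hs.2⟩
      _ ≤ profileWeight N Dv t * (κ * φ s + μ * φ s) := by gcongr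
      _ = (κ + μ) * φ s * profileWeight N Dv t := by ring
  calc Dv * (profileWeight N Dv s * dφ s)
      ≤ ∫ t in (0 : ℝ)..s, profileSource N Du Dv lam q κ φ t :=
        h.flux_le_integral hbR hDv hκ hlam (Ioo_subset_Ioc_self hs)
    _ ≤ ∫ t in (0 : ℝ)..s, (κ + μ) * φ s * profileWeight N Dv t :=
        intervalIntegral.integral_mono_on hs.1.le
          ((h.continuousOn_profileSource hsR).intervalIntegrable_of_Icc hs.1.le)
          ((continuous_const.mul continuous_profileWeight).intervalIntegrable _ _) hpt
    _ = (κ + μ) * φ s * ∫ t in (0 : ℝ)..s, profileWeight N Dv t :=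
        intervalIntegral.integral_const_mul _ _

theorem le_two_mul_exp_mul_max_rpow (h : IsProfileSol N Du Dv lam q κ R φ dφ) {r : ℝ}
    (hrR : (r : EReal) < R) (hr : 0 ≤ r) (hDu : 0 < Du) (hDv : 0 < Dv) (hq : 0 ≤ q)
    (hκ : 0 ≤ κ) (hlam : 0 ≤ lam)
    (hsmall : lam * ((2 * exp ((κ + 1) / (2 * Dv))) ^ q * exp (Du * (4 * (κ + 1) * q) ^ 2)) ≤ 1) :
    φ r ≤ 2 * exp ((κ + 1) / (2 * Dv)) * max r 1 ^ (4 * (κ + 1)) := by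
  set C := exp ((κ + 1) / (2 * Dv))
  set β := 4 * (κ + 1)
  have hβ : 0 ≤ β := by positivity
  have hG : Continuous fun x => 2 * C * max x 1 ^ β :=
    continuous_const.mul ((continuous_id.max continuous_const).rpow_const fun _ => Or.inr hβ)
  refine (forall_lt_of_le_before_imp_lt (h.continuousOn hrR) hG.continuousOn
    (fun b hb hbefore => ?_) r (right_mem_Icc.2 hr)).le
  have hbR := EReal.coe_lt_of_le_of_coe_lt hb.2 hrR
  have hsrc : ∀ t ∈ Ico 0 b, lam * exp (-(t ^ 2) / (4 * Du)) * φ t ^ q ≤ 1 * φ t := by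
    intro t ht
    have htb : t ∈ Icc 0 b := Ico_subset_Icc_self ht
    have hφt := h.pos hbR htb
    calc lam * exp (-(t ^ 2) / (4 * Du)) * φ t ^ q
        ≤ lam * exp (-(t ^ 2) / (4 * Du)) * (2 * C * max t 1 ^ β) ^ q := by
          gcongr; exact hbefore t ht
      _ = lam * ((2 * C) ^ q * (exp (-(t ^ 2) / (4 * Du)) * max t 1 ^ (β * q))) := by
          rw [mul_rpow (by positivity) (by positivity), ← rpow_mul (by positivity)]; ring
      _ ≤ lam * ((2 * C) ^ q * exp (Du * (β * q) ^ 2)) := by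
          gcongr; exact exp_neg_sq_div_mul_max_rpow_le hDu (by positivity) ht.1
      _ ≤ 1 * φ t := by rw [one_mul]; exact hsmall.trans (h.one_le hbR hDv hκ hlam htb)
  calc φ b ≤ C * max b 1 ^ β := h.le_of_source_le hbR hb.1 hDv hκ hlam zero_le_one hsrc
    _ < 2 * C * max b 1 ^ β := by rw [mul_assoc]; exact lt_two_mul_self (by positivity)

end IsProfileSol

theorem stmt4_general
    (N : ℕ) (Du Dv q κ : ℝ)
    (hDu : 0 < Du) (hDv : 0 < Dv) (hq : 1 ≤ q) (hκ : 0 ≤ κ) :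
    (∃ ε > 0, ∃ L > 0, ∀ lam : ℝ, 0 < lam → lam ≤ ε →
      ∀ (R : EReal) (φ dφ : ℝ → ℝ), IsProfileSol N Du Dv lam q κ R φ dφ →
        ∀ r : ℝ, 0 ≤ r → (r : EReal) < R → φ r ≤ L * (max r 1) ^ (4 * (κ + 1))) ∧
    (q = 1 → ∀ lam : ℝ, 0 < lam → ∃ L > 0, ∃ e : ℝ,
      ∀ (R : EReal) (φ dφ : ℝ → ℝ), IsProfileSol N Du Dv lam q κ R φ dφ →
        ∀ r : ℝ, 0 ≤ r → (r : EReal) < R → φ r ≤ L * (max r 1) ^ e) := by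
  refine ⟨?_, fun hq1 lam hlam => ?_⟩
  · set K := (2 * exp ((κ + 1) / (2 * Dv))) ^ q * exp (Du * (4 * (κ + 1) * q) ^ 2)
    have hK : 0 < K := by positivity
    refine ⟨K⁻¹, inv_pos.2 hK, 2 * exp ((κ + 1) / (2 * Dv)), by positivity,
      fun lam hlam hlamK R φ dφ h r hr hrR => ?_⟩
    refine h.le_two_mul_exp_mul_max_rpow hrR hr hDu hDv (by linarith) hκ hlam.le ?_
    calc lam * K ≤ K⁻¹ * K := by gcongr
      _ = 1 := inv_mul_cancel₀ hK.ne'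
  · refine ⟨exp ((κ + lam) / (2 * Dv)), exp_pos _, 4 * (κ + lam),
      fun R φ dφ h r hr hrR => h.le_of_source_le hrR hr hDv hκ hlam.le hlam.le fun t ht => ?_⟩
    have hgauss : exp (-(t ^ 2) / (4 * Du)) ≤ 1 :=
      exp_le_one_iff.2 (div_nonpos_of_nonpos_of_nonneg (neg_nonpos.2 (sq_nonneg t)) (by positivity))
    have hφt := h.pos hrR (Ico_subset_Icc_self ht)
    rw [hq1, rpow_one]
    calc lam * exp (-(t ^ 2) / (4 * Du)) * φ t ≤ lam * 1 * φ t := by gcongr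
      _ = lam * φ t := by rw [mul_one]

/-- For `κ ≥ 0` and `q ≥ 1` there are `ε, L > 0` (depending only on the
parameters) such that for every `0 < λ ≤ ε`, every positive C² solution of the profile
equation on `[0,R)` satisfies `φ(r) ≤ L max(r,1)^{4(κ+1)}`; when `q = 1` the same kind
of algebraic bound (with `L` and the exponent depending on `λ`) holds for every `λ > 0`. -/
theorem stmt4
    (N : ℕ) (hN : 1 ≤ N) (Du Dv q κ : ℝ)
    (hDu : 0 < Du) (hDv : 0 < Dv) (hq : 1 ≤ q) (hκ : 0 ≤ κ) :
    (∃ ε > 0, ∃ L > 0, ∀ lam : ℝ, 0 < lam → lam ≤ ε →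
      ∀ (R : EReal) (φ dφ : ℝ → ℝ), IsProfileSol N Du Dv lam q κ R φ dφ →
        ∀ r : ℝ, 0 ≤ r → (r : EReal) < R → φ r ≤ L * (max r 1) ^ (4 * (κ + 1))) ∧
    (q = 1 → ∀ lam : ℝ, 0 < lam → ∃ L > 0, ∃ e : ℝ,
      ∀ (R : EReal) (φ dφ : ℝ → ℝ), IsProfileSol N Du Dv lam q κ R φ dφ →
        ∀ r : ℝ, 0 ≤ r → (r : EReal) < R → φ r ≤ L * (max r 1) ^ e) :=
  stmt4_general N Du Dv q κ hDu hDv hq hκ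
end

section
/- Let N ≥ 1 be an integer, D_u, D_v, λ > 0, q ≥ 1 and −N/2 ≤ κ < 0, and set ρ(r) = r^{N−1} e^{r²/(4D_v)}. Let φ : [0,R) → ℝ be a positive C² solution of D_v (ρ φ')' = κ ρ φ + λ ρ e^{−r²/(4D_u)} φ^q on (0,R) with φ(0) = 1 and φ'(0) = 0. Then φ(r) > e^{−r²/(4D_v)} for all r ∈ (0,R). -/
/-!
Since `ρ(r) e^{-r²/(4Dᵥ)} = r^{N-1}`, the quantity
`W = Dᵥ r^{N-1} φ' + r^N φ / 2 = Dᵥ r^{N-1} e^{-r²/(4Dᵥ)} (e^{r²/(4Dᵥ)} φ)'`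
satisfies `W' = r^{N-1} ((κ + N/2) φ + λ e^{-r²/(4Dᵤ)} φ^q) > 0`, because `κ ≥ -N/2`.
As `φ'(0) = 0`, `W` comes arbitrarily close to `0` near `0`, so `W > 0` on `(0, R)`.
Hence `e^{r²/(4Dᵥ)} φ` is strictly increasing from its value `1` at `0`.
-/

open Real Set Filter Topology

theorem continuousOn_Icc_of_hasDerivAt_Ioc {f f' : ℝ → ℝ} {a b : ℝ}
    (h₀ : ContinuousWithinAt f (Ici a) a) (h : ∀ x ∈ Ioc a b, HasDerivAt f (f' x) x) :
    ContinuousOn f (Icc a b) := by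
  intro x hx
  rcases hx.1.eq_or_lt with rfl | hax
  · exact h₀.mono Icc_subset_Ici_self
  · exact (h x ⟨hax, hx.2⟩).continuousAt.continuousWithinAt

/-- By the mean value theorem, every one-sided difference quotient at `a` is a value of `f'`
just to the right of `a`. -/
theorem mapClusterPt_nhdsGT_of_hasDerivWithinAt_Ici {f f' : ℝ → ℝ} {a : ℝ}
    (h₀ : HasDerivWithinAt f (f' a) (Ici a) a) (h : ∀ᶠ x in 𝓝[>] a, HasDerivAt f (f' x) x) :
    MapClusterPt (f' a) (𝓝[>] a) f' := by
  rw [mapClusterPt_iff_frequently]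
  intro s hs
  have hslope : ∀ᶠ t in 𝓝[>] a, slope f a t ∈ s :=
    (hasDerivWithinAt_iff_tendsto_slope' self_notMem_Ioi |>.1
      (hasDerivWithinAt_Ioi_iff_Ici.2 h₀)) hs
  obtain ⟨c, hac, hc⟩ := mem_nhdsGT_iff_exists_Ioo_subset.1 h
  rw [Filter.frequently_iff]
  intro U hU
  obtain ⟨d, had, hd⟩ := mem_nhdsGT_iff_exists_Ioo_subset.1 hU
  obtain ⟨t, ht, hat, htcd⟩ := (hslope.and (Ioo_mem_nhdsGT (lt_min hac had))).exists
  have hderiv : ∀ x ∈ Ioc a t, HasDerivAt f (f' x) x :=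
    fun x hx => hc ⟨hx.1, hx.2.trans_lt (htcd.trans_le (min_le_left _ _))⟩
  obtain ⟨ξ, hξ, hξt⟩ := exists_hasDerivAt_eq_slope f f' hat
    (continuousOn_Icc_of_hasDerivAt_Ioc h₀.continuousWithinAt hderiv)
    (fun x hx => hderiv x (Ioo_subset_Ioc_self hx))
  refine ⟨ξ, hd ⟨hξ.1, hξ.2.trans (htcd.trans_le (min_le_right _ _))⟩, ?_⟩
  rwa [hξt, ← slope_def_field]

theorem StrictMonoOn.lt_of_frequently_nhdsGT {g : ℝ → ℝ} {a b c x : ℝ}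
    (hg : StrictMonoOn g (Ioc a b)) (h : ∀ c' < c, ∃ᶠ y in 𝓝[>] a, c' < g y)
    (hx : x ∈ Ioc a b) : c < g x := by
  have hy : (a + x) / 2 ∈ Ioc a b := ⟨by linarith [hx.1], by linarith [hx.1, hx.2]⟩
  have hyx : g ((a + x) / 2) < g x := hg hy hx (by linarith [hx.1])
  have hcy : c ≤ g ((a + x) / 2) := by
    by_contra! hlt
    obtain ⟨z, hz, haz, hzy⟩ := ((h _ hlt).and_eventually (Ioo_mem_nhdsGT hy.1)).exists
    exact (hg ⟨haz, hzy.le.trans hy.2⟩ hy hzy).not_gt hz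
  exact hcy.trans_lt hyx

theorem strictMonoOn_of_hasDerivAt_pos {D : Set ℝ} (hD : Convex ℝ D) {f f' : ℝ → ℝ}
    (hf : ∀ x ∈ D, HasDerivAt f (f' x) x) (hf' : ∀ x ∈ interior D, 0 < f' x) :
    StrictMonoOn f D :=
  strictMonoOn_of_hasDerivWithinAt_pos hD
    (fun x hx => (hf x hx).continuousAt.continuousWithinAt)
    (fun x hx => (hf x (interior_subset hx)).hasDerivWithinAt) hf'

/-- The Gaussian factor in `weightedFlux_eq_exp_mul` creates a term `-r^N φ'/2` in the derivative
of the flux `Dᵥ ρ φ'`, which the derivative of `r^N φ / 2` cancels. -/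
noncomputable def weightedFlux (N : ℕ) (Dv : ℝ) (φ dφ : ℝ → ℝ) (s : ℝ) : ℝ :=
  Dv * s ^ (N - 1) * dφ s + s ^ N * φ s / 2

section weightedFlux

variable {N : ℕ} {Dv : ℝ} {φ dφ : ℝ → ℝ}

theorem weightedFlux_eq_mul (hN : 1 ≤ N) (hDv : Dv ≠ 0) (r : ℝ) :
    weightedFlux N Dv φ dφ r = Dv * r ^ (N - 1) * (dφ r + r * φ r / (2 * Dv)) := by
  obtain ⟨n, rfl⟩ := Nat.exists_eq_add_of_le' hN
  simp only [weightedFlux, Nat.add_sub_cancel]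
  field_simp
  ring

theorem weightedFlux_eq_exp_mul (r : ℝ) :
    weightedFlux N Dv φ dφ r = exp (-(r ^ 2) / (4 * Dv)) *
      (Dv * (r ^ (N - 1) * exp (r ^ 2 / (4 * Dv)) * dφ r)) + r ^ N * φ r / 2 := by
  rw [weightedFlux, neg_div, exp_neg]
  field_simp

theorem hasDerivAt_weightedFlux (hN : 1 ≤ N) (hDv : Dv ≠ 0) {S r : ℝ}
    (hF : HasDerivAt (fun s => Dv * (s ^ (N - 1) * exp (s ^ 2 / (4 * Dv)) * dφ s))
      (r ^ (N - 1) * exp (r ^ 2 / (4 * Dv)) * S) r)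
    (hφ : HasDerivAt φ (dφ r) r) :
    HasDerivAt (weightedFlux N Dv φ dφ) (r ^ (N - 1) * (S + N / 2 * φ r)) r := by
  have hgauss : HasDerivAt (fun s => exp (-(s ^ 2) / (4 * Dv)))
      (exp (-(r ^ 2) / (4 * Dv)) * (-(2 * r) / (4 * Dv))) r := by
    simpa using (((hasDerivAt_pow 2 r).neg).div_const (4 * Dv)).exp
  have hpow : r ^ N = r ^ (N - 1) * r := by
    rw [← pow_succ, Nat.sub_add_cancel hN]
  rw [show weightedFlux N Dv φ dφ = _ from funext weightedFlux_eq_exp_mul]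
  refine ((hgauss.mul hF).add (((hasDerivAt_pow N r).mul hφ).div_const 2)).congr_deriv ?_
  rw [hpow, neg_div, exp_neg]
  field_simp
  ring

theorem strictMonoOn_weightedFlux (hN : 1 ≤ N) (hDv : Dv ≠ 0) {b κ lam Du q : ℝ}
    (hκ : -(N : ℝ) / 2 ≤ κ) (hlam : 0 < lam) (hpos : ∀ r ∈ Ioc 0 b, 0 < φ r)
    (hφ : ∀ r ∈ Ioc 0 b, HasDerivAt φ (dφ r) r)
    (hODE : ∀ r ∈ Ioc 0 b,
      HasDerivAt (fun s => Dv * (s ^ (N - 1) * exp (s ^ 2 / (4 * Dv)) * dφ s))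
        (κ * (r ^ (N - 1) * exp (r ^ 2 / (4 * Dv))) * φ r + lam * (r ^ (N - 1) *
          exp (r ^ 2 / (4 * Dv))) * exp (-(r ^ 2) / (4 * Du)) * φ r ^ q) r) :
    StrictMonoOn (weightedFlux N Dv φ dφ) (Ioc 0 b) := by
  refine strictMonoOn_of_hasDerivAt_pos (convex_Ioc 0 b) (fun r hr => hasDerivAt_weightedFlux hN hDv
    (S := κ * φ r + lam * exp (-(r ^ 2) / (4 * Du)) * φ r ^ q)
    ((hODE r hr).congr_deriv (by ring)) (hφ r hr)) fun r hr => ?_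
  rw [interior_Ioc] at hr
  have hφr := hpos r (Ioo_subset_Ioc_self hr)
  have hlinear : 0 ≤ (κ + N / 2) * φ r := mul_nonneg (by linarith) hφr.le
  have hsource : 0 < lam * exp (-(r ^ 2) / (4 * Du)) * φ r ^ q := by
    have := rpow_pos_of_pos hφr q
    positivity
  exact mul_pos (pow_pos hr.1 _) (by linarith)

theorem weightedFlux_pos (hDv : 0 < Dv) {b r : ℝ}
    (hφ₀ : HasDerivWithinAt φ (dφ 0) (Ici 0) 0) (hdφ₀ : dφ 0 = 0)
    (hφ : ∀ r ∈ Ioc 0 b, HasDerivAt φ (dφ r) r) (hpos : ∀ r ∈ Ioc 0 b, 0 < φ r)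
    (hmono : StrictMonoOn (weightedFlux N Dv φ dφ) (Ioc 0 b)) (hr : r ∈ Ioc 0 b) :
    0 < weightedFlux N Dv φ dφ r := by
  have hb : 0 < b := hr.1.trans_le hr.2
  have hcluster := mapClusterPt_nhdsGT_of_hasDerivWithinAt_Ici hφ₀
    (mem_of_superset (Ioo_mem_nhdsGT hb) fun x hx => hφ x (Ioo_subset_Ioc_self hx))
  rw [hdφ₀] at hcluster
  refine hmono.lt_of_frequently_nhdsGT (fun c hc => ?_) hr
  refine ((hcluster.frequently (Ioi_mem_nhds (div_neg_of_neg_of_pos hc hDv))).and_eventually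
    (Ioo_mem_nhdsGT (lt_min hb one_pos))).mono ?_
  rintro ξ ⟨hdξ, hξ0, hξ1⟩
  have hξb : ξ ∈ Ioc 0 b := ⟨hξ0, hξ1.le.trans (min_le_left _ _)⟩
  have hpow : ξ ^ (N - 1) ≤ 1 := pow_le_one₀ hξ0.le (hξ1.le.trans (min_le_right _ _))
  have hrest : 0 ≤ ξ ^ N * φ ξ / 2 := by have := hpos ξ hξb; positivity
  have hdξ' : c < dφ ξ * Dv := (div_lt_iff₀ hDv).1 hdξ
  have hfirst : c < Dv * ξ ^ (N - 1) * dφ ξ := by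
    rcases le_or_gt 0 (dφ ξ) with h | h
    · have hnonneg : 0 ≤ Dv * ξ ^ (N - 1) * dφ ξ := by positivity
      linarith
    · nlinarith [mul_nonneg (mul_nonneg hDv.le (neg_nonneg.2 h.le)) (sub_nonneg.2 hpow)]
  unfold weightedFlux
  linarith

end weightedFlux

theorem exp_neg_sq_lt_of_weightedFlux_pos {N : ℕ} {Dv b : ℝ} {φ dφ : ℝ → ℝ} (hN : 1 ≤ N)
    (hDv : 0 < Dv) (hb : 0 < b) (hφ₀ : ContinuousWithinAt φ (Ici 0) 0) (hφ0 : φ 0 = 1)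
    (hφ : ∀ r ∈ Ioc 0 b, HasDerivAt φ (dφ r) r)
    (hflux : ∀ r ∈ Ioo 0 b, 0 < weightedFlux N Dv φ dφ r) :
    exp (-(b ^ 2) / (4 * Dv)) < φ b := by
  have hgauss (r : ℝ) : HasDerivAt (fun s => exp (s ^ 2 / (4 * Dv)))
      (exp (r ^ 2 / (4 * Dv)) * (r / (2 * Dv))) r := by
    convert ((hasDerivAt_pow 2 r).div_const (4 * Dv)).exp using 2
    field_simp
    ring
  have hmono : StrictMonoOn (fun s => exp (s ^ 2 / (4 * Dv)) * φ s) (Icc 0 b) := by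
    refine strictMonoOn_of_hasDerivWithinAt_pos (convex_Icc 0 b)
      ((continuous_exp.comp ((continuous_pow 2).div_const _)).continuousOn.mul
        (continuousOn_Icc_of_hasDerivAt_Ioc hφ₀ hφ))
      (fun r hr => ((hgauss r).mul
        (hφ r (Ioo_subset_Ioc_self (by rwa [interior_Icc] at hr)))).hasDerivWithinAt)
      fun r hr => ?_
    rw [interior_Icc] at hr
    have hfactor : 0 < dφ r + r * φ r / (2 * Dv) := by
      refine pos_of_mul_pos_right ?_ (mul_nonneg hDv.le (pow_nonneg hr.1.le (N - 1)))
      rw [← weightedFlux_eq_mul hN hDv.ne']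
      exact hflux r hr
    calc 0 < exp (r ^ 2 / (4 * Dv)) * (dφ r + r * φ r / (2 * Dv)) := by positivity
      _ = _ := by ring
  have h : 1 < exp (b ^ 2 / (4 * Dv)) * φ b := by
    simpa [hφ0] using hmono (left_mem_Icc.2 hb.le) (right_mem_Icc.2 hb.le) hb
  rwa [neg_div, exp_neg, inv_lt_iff_one_lt_mul₀ (exp_pos _), mul_comm]

theorem stmt8_general
    (N : ℕ) (hN : 1 ≤ N) (Du Dv lam q κ : ℝ)
    (hDv : 0 < Dv) (hlam : 0 < lam)
    (hκ₁ : -(N : ℝ) / 2 ≤ κ)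
    (R : EReal)
    (ρ : ℝ → ℝ) (hρ : ∀ r : ℝ, ρ r = r ^ (N - 1) * Real.exp (r ^ 2 / (4 * Dv)))
    (φ dφ : ℝ → ℝ)
    (hpos : ∀ r : ℝ, 0 ≤ r → (r : EReal) < R → 0 < φ r)
    (hφ' : ∀ r : ℝ, 0 ≤ r → (r : EReal) < R → HasDerivWithinAt φ (dφ r) (Ici 0) r)
    (hODE : ∀ r : ℝ, 0 < r → (r : EReal) < R →
      HasDerivAt (fun s => Dv * (ρ s * dφ s))
        (κ * ρ r * φ r + lam * ρ r * Real.exp (-(r ^ 2) / (4 * Du)) * φ r ^ q) r)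
    (hφ0 : φ 0 = 1) (hdφ0 : dφ 0 = 0) :
    ∀ r : ℝ, 0 < r → (r : EReal) < R → Real.exp (-(r ^ 2) / (4 * Dv)) < φ r := by
  intro b hb hbR
  obtain rfl : ρ = _ := funext hρ
  have hlt {r : ℝ} (hr : r ∈ Ioc 0 b) : (r : EReal) < R :=
    (EReal.coe_le_coe_iff.2 hr.2).trans_lt hbR
  have h0 : HasDerivWithinAt φ (dφ 0) (Ici 0) 0 :=
    hφ' 0 le_rfl ((EReal.coe_le_coe_iff.2 hb.le).trans_lt hbR)
  have hφ (r : ℝ) (hr : r ∈ Ioc 0 b) : HasDerivAt φ (dφ r) r :=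
    (hφ' r hr.1.le (hlt hr)).hasDerivAt (Ici_mem_nhds hr.1)
  have hpos' (r : ℝ) (hr : r ∈ Ioc 0 b) : 0 < φ r := hpos r hr.1.le (hlt hr)
  have hmono := strictMonoOn_weightedFlux hN hDv.ne' hκ₁ hlam hpos' hφ
    fun r hr => hODE r hr.1 (hlt hr)
  exact exp_neg_sq_lt_of_weightedFlux_pos hN hDv hb h0.continuousWithinAt hφ0 hφ
    fun r hr => weightedFlux_pos hDv h0 hdφ0 hφ hpos' hmono (Ioo_subset_Ioc_self hr)

/-- For the self-similar profile equation
`Dᵥ (ρ φ')' = κ ρ φ + λ ρ e^{-r²/(4Dᵤ)} φ^q` with `ρ(r) = r^{N-1} e^{r²/(4Dᵥ)}`,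
`φ(0)=1`, `φ'(0)=0`, and `−N/2 ≤ κ < 0`, any positive C² solution on `[0,R)`
satisfies `φ(r) > e^{−r²/(4Dᵥ)}` on `(0,R)`. -/
theorem stmt8
    (N : ℕ) (hN : 1 ≤ N) (Du Dv lam q κ : ℝ)
    (hDu : 0 < Du) (hDv : 0 < Dv) (hlam : 0 < lam) (hq : 1 ≤ q)
    (hκ₁ : -(N : ℝ) / 2 ≤ κ) (hκ₂ : κ < 0)
    (R : EReal) (hR : 0 < R)
    (ρ : ℝ → ℝ) (hρ : ∀ r : ℝ, ρ r = r ^ (N - 1) * Real.exp (r ^ 2 / (4 * Dv)))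
    (φ dφ : ℝ → ℝ)
    (hpos : ∀ r : ℝ, 0 ≤ r → (r : EReal) < R → 0 < φ r)
    (hφ' : ∀ r : ℝ, 0 ≤ r → (r : EReal) < R → HasDerivWithinAt φ (dφ r) (Ici 0) r)
    (hODE : ∀ r : ℝ, 0 < r → (r : EReal) < R →
      HasDerivAt (fun s => Dv * (ρ s * dφ s))
        (κ * ρ r * φ r + lam * ρ r * Real.exp (-(r ^ 2) / (4 * Du)) * φ r ^ q) r)
    (hφ0 : φ 0 = 1) (hdφ0 : dφ 0 = 0) :
    ∀ r : ℝ, 0 < r → (r : EReal) < R → Real.exp (-(r ^ 2) / (4 * Dv)) < φ r :=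
  stmt8_general N hN Du Dv lam q κ hDv hlam hκ₁ R ρ hρ φ dφ hpos hφ' hODE hφ0 hdφ0
end
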